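/- Let 0 < δ < ε, X ⊂ ℝ^m a compact box covered by sub-boxes Y^1,...,Y^N, f: ℝ^m → ℝ^p continuous, and f^k ≤ f componentwise on Y^k with gap f_j(x) - f_j^k(x) < ε - δ for all j, x ∈ Y^k. Then every element of X^δ_{wE_ap} = {x ∈ ⋃_k W^δ_k : ∄ y ∈ ⋃_k W^δ_k with f(y) + δ·e ≺ f(x)} is an ε-weakly efficient solution of min_X f. -/

import Mathlib

/-!
Each `Y k` is compact and `fk k` is continuous on it, so every point `y ∈ Y k` is dominated by a
weakly efficient point `w` of `fk k` on `Y k` (minimise one component over the points dominating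
`y`), and `w` lies in `Wδ k`. If `f y + ε < f x`, then the gap bound `f - fk k < ε - δ` gives
`f w + δ < fk k w + ε ≤ fk k y + ε ≤ f y + ε < f x`, contradicting the choice of `x`.
-/

open Set

def IsWeaklyEfficient {X ι : Type*} (g : X → ι → ℝ) (s : Set X) (δ : ℝ) (x : X) : Prop :=
  x ∈ s ∧ ¬∃ y ∈ s, ∀ j, g y j + δ < g x j

theorem IsWeaklyEfficient.mono {X ι : Type*} {g : X → ι → ℝ} {s : Set X} {δ δ' : ℝ} {x : X}
    (hx : IsWeaklyEfficient g s δ x) (hδ : δ ≤ δ') : IsWeaklyEfficient g s δ' x :=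
  ⟨hx.1, fun ⟨y, hy, hlt⟩ => hx.2 ⟨y, hy, fun j => by linarith [hlt j]⟩⟩

theorem ContinuousOn.isCompact_inter_preimage {X Z : Type*} [TopologicalSpace X]
    [TopologicalSpace Z] {f : X → Z} {s : Set X} {t : Set Z} (hf : ContinuousOn f s) (hs : IsCompact s) (ht : IsClosed t) :
    IsCompact (s ∩ f ⁻¹' t) := by
  obtain ⟨u, hu, hfu⟩ := continuousOn_iff_isClosed.mp hf t ht
  rw [inter_comm, hfu]
  exact hs.inter_left hu

theorem IsCompact.exists_isWeaklyEfficient_le {X ι : Type*} [TopologicalSpace X] [Nonempty ι]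
    {g : X → ι → ℝ} {s : Set X} (hs : IsCompact s) (hg : ContinuousOn g s) {y : X} (hy : y ∈ s) :
    ∃ w, IsWeaklyEfficient g s 0 w ∧ g w ≤ g y := by
  obtain ⟨j₀⟩ := ‹Nonempty ι›
  set t := s ∩ g ⁻¹' Iic (g y)
  have ht : IsCompact t := hg.isCompact_inter_preimage hs isClosed_Iic
  obtain ⟨w, ⟨hws, hwy⟩, hmin⟩ :=
    ht.exists_isMinOn ⟨y, hy, le_refl (g y)⟩ (((continuous_apply j₀).comp_continuousOn hg).mono
      inter_subset_left)
  refine ⟨w, ⟨hws, ?_⟩, hwy⟩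
  rintro ⟨z, hzs, hzw⟩
  have hwz : g w j₀ ≤ g z j₀ := hmin ⟨hzs, fun j => by linarith [hzw j, hwy j]⟩
  linarith [hzw j₀]

theorem stmt14_general (m p N : ℕ) (Y : Fin N → Set (Fin m → ℝ))
    (hYc : ∀ k, IsCompact (Y k))
    (f : (Fin m → ℝ) → Fin p → ℝ)
    (fk : Fin N → (Fin m → ℝ) → Fin p → ℝ) (hfk : ∀ k, ContinuousOn (fk k) (Y k))
    (δ ε : ℝ) (hδ : 0 < δ)
    (hle : ∀ k, ∀ x ∈ Y k, ∀ j, fk k x j ≤ f x j)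
    (hgap : ∀ k, ∀ x ∈ Y k, ∀ j, f x j - fk k x j < ε - δ)
    (Wδ : Fin N → Set (Fin m → ℝ))
    (hWδ : ∀ k, Wδ k = {z ∈ Y k | ¬∃ y ∈ Y k, ∀ j, fk k y j + δ < fk k z j})
    (x : Fin m → ℝ)
    (hx : x ∈ {z ∈ ⋃ k, Wδ k | ¬∃ y ∈ ⋃ k, Wδ k, ∀ j, f y j + δ < f z j}) :
    ¬∃ y ∈ ⋃ k, Y k, ∀ j, f y j + ε < f x j := by
  rcases isEmpty_or_nonempty (Fin p) with hp | hp
  · exact fun _ => hx.2 ⟨x, hx.1, isEmptyElim⟩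
  rintro ⟨y, hyY, hyx⟩
  obtain ⟨k, hyk⟩ := mem_iUnion.mp hyY
  obtain ⟨w, hw, hwy⟩ := (hYc k).exists_isWeaklyEfficient_le (hfk k) hyk
  have hwW : w ∈ Wδ k := by
    rw [hWδ k]
    exact hw.mono hδ.le
  refine hx.2 ⟨w, mem_iUnion.mpr ⟨k, hwW⟩, fun j => ?_⟩
  calc f w j + δ < fk k w j + ε := by linarith [hgap k w hw.1 j]
    _ ≤ fk k y j + ε := by gcongr; exact hwy j
    _ ≤ f y j + ε := by gcongr; exact hle k y hyk j
    _ < f x j := hyx j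

/-- Every element of the `δ`-weakly efficient solution set of the piecewise convexification
problem is an `ε`-weakly efficient solution of the original problem, for `0 < δ < ε` and
relaxation gap less than `ε - δ`. -/
theorem stmt14 (m p N : ℕ) (Y : Fin N → Set (Fin m → ℝ))
    (hYc : ∀ k, IsCompact (Y k)) (hYne : ∀ k, (Y k).Nonempty)
    (f : (Fin m → ℝ) → Fin p → ℝ) (hf : Continuous f)
    (fk : Fin N → (Fin m → ℝ) → Fin p → ℝ) (hfk : ∀ k, ContinuousOn (fk k) (Y k))
    (δ ε : ℝ) (hδ : 0 < δ) (hδε : δ < ε)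
    (hle : ∀ k, ∀ x ∈ Y k, ∀ j, fk k x j ≤ f x j)
    (hgap : ∀ k, ∀ x ∈ Y k, ∀ j, f x j - fk k x j < ε - δ)
    (Wδ : Fin N → Set (Fin m → ℝ))
    (hWδ : ∀ k, Wδ k = {z ∈ Y k | ¬∃ y ∈ Y k, ∀ j, fk k y j + δ < fk k z j})
    (x : Fin m → ℝ)
    (hx : x ∈ {z ∈ ⋃ k, Wδ k | ¬∃ y ∈ ⋃ k, Wδ k, ∀ j, f y j + δ < f z j}) :
    ¬∃ y ∈ ⋃ k, Y k, ∀ j, f y j + ε < f x j :=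
  stmt14_general m p N Y hYc f fk hfk δ ε hδ hle hgap Wδ hWδ x hx
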